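/- arXiv:1410.0532 — 9 statements merged into one kernel-verified Lean document; each statement's English description precedes it below -/
import Mathlib

section
/- For every integer k ≥ 5, the Frobenius number of the quadruple (3k+1, 3k+4, 6k+3, 6k+9) is g(3k+1, 3k+4, 6k+3, 6k+9) = (3k+1)·(k − ⌊(3k+1)/21⌋) − 1. -/
/-!
A combination `x a + y (a + 3) + z (2a + 1) + w (2a + 7)` equals `a t + r` with
`r = 3y + z + 7w` and `t ≥ y + 2z + 2w`. As `2 (3y + z + 7w) ≤ 7 (y + 2z + 2w)`, a remainder `r`
needs `t ≥ 2r / 7`, and conversely `t ≥ max 5 ⌈2r / 7⌉` suffices. So with `7m ∈ [2a - 2, 2a + 4]`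
and `m ≥ 5`, every `n ≥ a m` is representable with `r = n mod a`, whereas `a m - 1 = a t + r`
forces `r + 1 = a (m - t)`, too large for `t < m`. For `a = 3k + 1` this `m` is
`k - ⌊(3k + 1) / 21⌋`.
-/

theorem AddSubmonoid.mem_closure_quad {A : Type*} [AddCommMonoid A] (a b c d x : A) :
    x ∈ AddSubmonoid.closure ({a, b, c, d} : Set A) ↔
      ∃ i j k l : ℕ, i • a + j • b + k • c + l • d = x := by
  rw [show ({a, b, c, d} : Set A) = {a, b} ∪ {c, d} by rw [Set.insert_union, Set.singleton_union],
    AddSubmonoid.closure_union, AddSubmonoid.mem_sup]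
  simp_rw [AddSubmonoid.mem_closure_pair]
  constructor
  · rintro ⟨_, ⟨i, j, rfl⟩, _, ⟨k, l, rfl⟩, rfl⟩
    exact ⟨i, j, k, l, by abel⟩
  · rintro ⟨i, j, k, l, rfl⟩
    exact ⟨_, ⟨i, j, rfl⟩, _, ⟨k, l, rfl⟩, by abel⟩

theorem mem_closure_quadruple_iff (a n : ℕ) :
    n ∈ AddSubmonoid.closure ({a, a + 3, 2 * a + 1, 2 * a + 7} : Set ℕ) ↔
      ∃ t y z w, y + 2 * z + 2 * w ≤ t ∧ a * t + (3 * y + z + 7 * w) = n := by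
  simp only [AddSubmonoid.mem_closure_quad, smul_eq_mul]
  constructor
  · rintro ⟨x, y, z, w, rfl⟩
    exact ⟨x + y + 2 * z + 2 * w, y, z, w, by omega, by ring⟩
  · rintro ⟨t, y, z, w, hc, rfl⟩
    obtain ⟨x, rfl⟩ : ∃ x, t = x + (y + 2 * z + 2 * w) := ⟨t - (y + 2 * z + 2 * w), by omega⟩
    exact ⟨x, y, z, w, by ring⟩

theorem exists_decomposition_of_two_mul_le (r t : ℕ) (hr : 2 * r ≤ 7 * t) (ht : 5 ≤ t) :
    ∃ y z w, y + 2 * z + 2 * w ≤ t ∧ 3 * y + z + 7 * w = r := by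
  by_cases hr18 : r < 18
  · have small : ∀ r < 18, ∃ y ≤ 5, ∃ z ≤ 2, ∃ w ≤ 2,
        y + 2 * z + 2 * w ≤ 5 ∧ 3 * y + z + 7 * w = r := by decide
    obtain ⟨y, -, z, -, w, -, hc, he⟩ := small r hr18
    exact ⟨y, z, w, by omega, he⟩
  · -- `y := 5r mod 7` makes `r - 3y` divisible by `7`, and `y + 2w = (2r + y) / 7 = ⌈2r / 7⌉`.
    exact ⟨5 * r % 7, 0, (r - 3 * (5 * r % 7)) / 7, by omega, by omega⟩

theorem mul_sub_one_notMem_closure_quadruple (a m : ℕ) (hm : 0 < m) (h : 7 * m ≤ 2 * a + 4) :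
    a * m - 1 ∉ AddSubmonoid.closure ({a, a + 3, 2 * a + 1, 2 * a + 7} : Set ℕ) := by
  rw [mem_closure_quadruple_iff]
  rintro ⟨t, y, z, w, hc, he⟩
  have ht : t < m := by
    by_contra! hmt
    have := Nat.mul_le_mul_left a hmt
    have := Nat.mul_pos (by omega : 0 < a) hm
    omega
  obtain ⟨d, rfl⟩ : ∃ d, m = t + d + 1 := ⟨m - t - 1, by omega⟩
  have : a * (t + d + 1) = a * t + a * d + a := by ring
  omega

theorem mem_closure_quadruple_of_mul_le (a m n : ℕ) (ha : 0 < a) (h : 2 * a ≤ 7 * m + 2)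
    (hm : 5 ≤ m) (hn : a * m ≤ n) :
    n ∈ AddSubmonoid.closure ({a, a + 3, 2 * a + 1, 2 * a + 7} : Set ℕ) := by
  have hmt : m ≤ n / a := (Nat.le_div_iff_mul_le ha).2 (by linarith)
  have hr : 2 * (n % a) ≤ 7 * (n / a) := by have := Nat.mod_lt n ha; omega
  obtain ⟨y, z, w, hc, he⟩ := exists_decomposition_of_two_mul_le (n % a) (n / a) hr (by omega)
  exact (mem_closure_quadruple_iff a n).2 ⟨n / a, y, z, w, hc, by rw [he, Nat.div_add_mod]⟩

theorem frobeniusNumber_quadruple (a m : ℕ) (h₁ : 2 * a ≤ 7 * m + 2) (h₂ : 7 * m ≤ 2 * a + 4)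
    (hm : 5 ≤ m) :
    FrobeniusNumber (a * m - 1) {a, a + 3, 2 * a + 1, 2 * a + 7} := by
  exact frobeniusNumber_iff.2 ⟨mul_sub_one_notMem_closure_quadruple a m (by omega) h₂,
    fun n hn ↦ mem_closure_quadruple_of_mul_le a m n (by omega) h₁ hm (by omega)⟩

/-- For every integer `k ≥ 5`, the Frobenius number of the quadruple
`(3k+1, 3k+4, 6k+3, 6k+9)` is `(3k+1)·(k − ⌊(3k+1)/21⌋) − 1`. -/
theorem frobenius_quadruple_3k1 (k : ℕ) (hk : 5 ≤ k) :
    FrobeniusNumber ((3 * k + 1) * (k - (3 * k + 1) / 21) - 1)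
      ({3 * k + 1, 3 * k + 4, 6 * k + 3, 6 * k + 9} : Set ℕ) := by
  rw [show 3 * k + 4 = 3 * k + 1 + 3 by ring, show 6 * k + 3 = 2 * (3 * k + 1) + 1 by ring,
    show 6 * k + 9 = 2 * (3 * k + 1) + 7 by ring]
  exact frobeniusNumber_quadruple _ _ (by omega) (by omega) (by omega)
end

section
/- For every integer a ≥ 1, the Frobenius number of the quadruple (21a+1, 21a+4, 42a+3, 42a+9) is g(21a+1, 21a+4, 42a+3, 42a+9) = 126a² + 6a − 1. -/
/-!
With `m = 21a + 1` the generators are `m * c + s` for `(c, s) = (1, 0), (1, 3), (2, 1), (2, 7)`,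
so a sum of generators is `m * Q + S` with `S = 3y + z + 7w` and `Q ≥ y + 2z + 2w`; in particular
`2S ≤ 7Q`. Reaching `6am - 1` needs `S ≡ -1 (mod m)`, so `S ≥ 21a`, hence `Q ≥ 6a` and the sum
exceeds `6am - 1`. Conversely every residue `r ≤ 21a` is such an `S` with `y + 2z + 2w ≤ 6a`
(remove blocks `21 = 3 * 7` at cost `6`, then finish below `21` by a table), and every `k ≥ 6am`
has quotient `k / m ≥ 6a`.
-/

theorem AddSubmonoid.mem_closure_quadruple {A : Type*} [AddCommMonoid A] (a b c d n : A) :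
    n ∈ AddSubmonoid.closure ({a, b, c, d} : Set A) ↔
      ∃ x y z w : ℕ, x • a + y • b + z • c + w • d = n := by
  simp_rw [← Set.singleton_union, AddSubmonoid.closure_union, AddSubmonoid.mem_sup,
    AddSubmonoid.mem_closure_singleton]
  constructor
  · rintro ⟨_, ⟨x, rfl⟩, _, ⟨_, ⟨y, rfl⟩, _, ⟨_, ⟨z, rfl⟩, _, ⟨w, rfl⟩, rfl⟩, rfl⟩, rfl⟩
    exact ⟨x, y, z, w, by abel⟩
  · rintro ⟨x, y, z, w, rfl⟩
    exact ⟨_, ⟨x, rfl⟩, _, ⟨_, ⟨y, rfl⟩, _, ⟨_, ⟨z, rfl⟩, _, ⟨w, rfl⟩, rfl⟩, rfl⟩, by abel⟩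

theorem mem_closure_quadruple_iff_exists_cost_le (m n : ℕ) :
    n ∈ AddSubmonoid.closure ({m, m + 3, 2 * m + 1, 2 * m + 7} : Set ℕ) ↔
      ∃ Q y z w : ℕ, y + 2 * z + 2 * w ≤ Q ∧ m * Q + (3 * y + z + 7 * w) = n := by
  rw [AddSubmonoid.mem_closure_quadruple]
  constructor
  · rintro ⟨x, y, z, w, rfl⟩
    exact ⟨x + y + 2 * z + 2 * w, y, z, w, by omega, by simp only [smul_eq_mul]; ring⟩
  · rintro ⟨Q, y, z, w, hQ, rfl⟩
    obtain ⟨x, rfl⟩ := Nat.exists_eq_add_of_le' hQ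
    exact ⟨x, y, z, w, by simp only [smul_eq_mul]; ring⟩

theorem exists_cost_le_six_of_lt_21 :
    ∀ s < 21, ∃ y ≤ 6, ∃ z ≤ 3, ∃ w ≤ 3, 3 * y + z + 7 * w = s ∧ y + 2 * z + 2 * w ≤ 6 := by
  decide

theorem exists_cost_le_of_le_21_mul (a r : ℕ) (hr : r ≤ 21 * a) :
    ∃ y z w : ℕ, 3 * y + z + 7 * w = r ∧ y + 2 * z + 2 * w ≤ 6 * a := by
  induction a generalizing r with
  | zero => exact ⟨0, 0, 0, by omega, le_rfl⟩
  | succ a ih =>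
    rcases lt_or_ge r 21 with hr21 | hr21
    · obtain ⟨y, -, z, -, w, -, hs, hc⟩ := exists_cost_le_six_of_lt_21 r hr21
      exact ⟨y, z, w, hs, by omega⟩
    · obtain ⟨y, z, w, hs, hc⟩ := ih (r - 21) (by omega)
      exact ⟨y, z, w + 3, by omega, by omega⟩

theorem mul_add_add_one_ne_of_two_mul_le (a Q s : ℕ) (hs : 2 * s ≤ 7 * Q) :
    (21 * a + 1) * Q + s + 1 ≠ (21 * a + 1) * (6 * a) := by
  intro h
  have hQ : Q < 6 * a := by
    by_contra! hQ
    nlinarith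
  obtain ⟨t, ht⟩ : ∃ t, 6 * a = Q + t + 1 := ⟨6 * a - Q - 1, by omega⟩
  rw [ht] at h
  nlinarith

/-- For every integer `a ≥ 1`, the Frobenius number of the quadruple
`(21a+1, 21a+4, 42a+3, 42a+9)` is `126a² + 6a − 1`. -/
theorem frobenius_quadruple_case0 (a : ℕ) (ha : 1 ≤ a) :
    FrobeniusNumber (126 * a ^ 2 + 6 * a - 1)
      ({21 * a + 1, 21 * a + 4, 42 * a + 3, 42 * a + 9} : Set ℕ) := by
  have hset : ({21 * a + 1, 21 * a + 4, 42 * a + 3, 42 * a + 9} : Set ℕ) =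
      {21 * a + 1, 21 * a + 1 + 3, 2 * (21 * a + 1) + 1, 2 * (21 * a + 1) + 7} := by
    ring_nf
  have hN : 126 * a ^ 2 + 6 * a = (21 * a + 1) * (6 * a) := by ring
  have hpos : 0 < (21 * a + 1) * (6 * a) := by positivity
  rw [frobeniusNumber_iff, hset, hN]
  simp_rw [mem_closure_quadruple_iff_exists_cost_le]
  constructor
  · rintro ⟨Q, y, z, w, hcost, h⟩
    exact mul_add_add_one_ne_of_two_mul_le a Q (3 * y + z + 7 * w) (by omega) (by omega)
  · intro k hk
    obtain ⟨y, z, w, hs, hc⟩ := exists_cost_le_of_le_21_mul a (k % (21 * a + 1))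
      (Nat.lt_succ_iff.mp (Nat.mod_lt _ (by omega)))
    have hQ : 6 * a ≤ k / (21 * a + 1) :=
      (Nat.le_div_iff_mul_le (by omega)).mpr (by rw [mul_comm]; omega)
    exact ⟨k / (21 * a + 1), y, z, w, hc.trans hQ, by rw [hs]; exact Nat.div_add_mod k _⟩
end

section
/- For every integer a ≥ 1, the Frobenius number of the quadruple (21a+7, 21a+10, 42a+15, 42a+21) is g(21a+7, 21a+10, 42a+15, 42a+21) = 126a² + 84a + 13. -/
/-!
Put `m = 21a + 7`, so the generators are `m, m + 3, 2m + 1, 2m + 7`, and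
`w m + x (m + 3) + y (2m + 1) + z (2m + 7) = K m + S` with `K = w + x + 2y + 2z` and
`S = 3x + y + 7z ≤ 7K/2`. The target `126a² + 84a + 13` is `(6a + 2) m - 1`; writing it as
`K m + S` forces `S + 1` to be a positive multiple of `m`, and `m` is too large compared with
`7K/2 ≤ 7(6a + 1)/2`. Conversely every residue `t < m` is `3x + y + 7z` with
`x + 2y + 2z ≤ 6a + 2`, so every `n ≥ (6a + 2) m` is `K m + t` with `K` large enough.
-/

theorem AddSubmonoid.mem_closure_quad_s3 {M : Type*} [AddCommMonoid M] {p q r s n : M} :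
    n ∈ AddSubmonoid.closure ({p, q, r, s} : Set M) ↔
      ∃ w x y z : ℕ, w • p + x • q + y • r + z • s = n := by
  simp only [Set.insert_eq, AddSubmonoid.closure_union, AddSubmonoid.mem_sup,
    AddSubmonoid.mem_closure_singleton]
  constructor
  · rintro ⟨_, ⟨w, rfl⟩, _, ⟨_, ⟨x, rfl⟩, _, ⟨_, ⟨y, rfl⟩, _, ⟨z, rfl⟩, rfl⟩, rfl⟩, rfl⟩
    exact ⟨w, x, y, z, by abel⟩
  · rintro ⟨w, x, y, z, rfl⟩
    exact ⟨_, ⟨w, rfl⟩, _, ⟨_, ⟨x, rfl⟩, _, ⟨_, ⟨y, rfl⟩, _, ⟨z, rfl⟩, rfl⟩, rfl⟩, by abel⟩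

/-- The `5` accounts for the small exceptions `t = 2, 4, 5, 11`. -/
theorem exists_three_mul_add_add_seven_mul (t : ℕ) :
    ∃ x y z : ℕ, 3 * x + y + 7 * z = t ∧ x + 2 * y + 2 * z ≤ max 5 (2 * (t / 7) + 2) := by
  obtain ⟨q, r, hr, rfl⟩ : ∃ q r, r < 7 ∧ t = 7 * q + r :=
    ⟨t / 7, t % 7, Nat.mod_lt _ (by norm_num), (Nat.div_add_mod t 7).symm⟩
  rw [show (7 * q + r) / 7 = q by omega]
  interval_cases r
  · exact ⟨0, 0, q, by ring, by omega⟩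
  · exact ⟨0, 1, q, by ring, by omega⟩
  · rcases q with _ | q
    · exact ⟨0, 2, 0, rfl, by omega⟩
    · exact ⟨3, 0, q, by ring, by omega⟩
  · exact ⟨1, 0, q, by ring, by omega⟩
  · rcases Nat.lt_or_ge q 2 with hq | hq
    · exact ⟨1, 1, q, by ring, by omega⟩
    · exact ⟨6, 0, q - 2, by omega, by omega⟩
  · rcases q with _ | q
    · exact ⟨1, 2, 0, rfl, by omega⟩
    · exact ⟨4, 0, q, by ring, by omega⟩
  · exact ⟨2, 0, q, by ring, by omega⟩

section

variable {m c n : ℕ}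

theorem exists_cost_mul_add_of_mem_closure
    (hn : n ∈ AddSubmonoid.closure ({m, m + 3, 2 * m + 1, 2 * m + 7} : Set ℕ)) :
    ∃ K S : ℕ, K * m + S = n ∧ 2 * S ≤ 7 * K := by
  obtain ⟨w, x, y, z, rfl⟩ := AddSubmonoid.mem_closure_quad_s3.mp hn
  refine ⟨w + x + 2 * y + 2 * z, 3 * x + y + 7 * z, ?_, by omega⟩
  simp only [smul_eq_mul]
  ring

theorem not_mem_closure_of_add_one_eq_mul (h : n + 1 = c * m) (hc : 7 * c < 2 * m + 5) :
    n ∉ AddSubmonoid.closure ({m, m + 3, 2 * m + 1, 2 * m + 7} : Set ℕ) := by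
  intro hn
  obtain ⟨K, S, hKS, hS⟩ := exists_cost_mul_add_of_mem_closure hn
  have hKc : K + 1 ≤ c := by
    by_contra! hcK
    nlinarith [Nat.mul_le_mul_right m (Nat.le_of_lt_succ hcK)]
  have hmS : m ≤ S + 1 := by nlinarith [Nat.mul_le_mul_right m hKc]
  omega

theorem mem_closure_of_mul_le (hm : 0 < m)
    (hres : ∀ t < m, ∃ x y z : ℕ, 3 * x + y + 7 * z = t ∧ x + 2 * y + 2 * z ≤ c)
    (hn : c * m ≤ n) :
    n ∈ AddSubmonoid.closure ({m, m + 3, 2 * m + 1, 2 * m + 7} : Set ℕ) := by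
  obtain ⟨x, y, z, ht, hcost⟩ := hres (n % m) (Nat.mod_lt n hm)
  have hq : c ≤ n / m := (Nat.le_div_iff_mul_le hm).mpr hn
  refine AddSubmonoid.mem_closure_quad_s3.mpr ⟨n / m - (x + 2 * y + 2 * z), x, y, z, ?_⟩
  calc _ = (n / m - (x + 2 * y + 2 * z) + (x + 2 * y + 2 * z)) * m + (3 * x + y + 7 * z) := by
        simp only [smul_eq_mul]; ring
    _ = n := by rw [Nat.sub_add_cancel (by omega), ht, mul_comm, Nat.div_add_mod]

end

/-- For every integer `a ≥ 1`, the Frobenius number of the quadruple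
`(21a+7, 21a+10, 42a+15, 42a+21)` is `126a² + 84a + 13`. -/
theorem frobenius_quadruple_case2 (a : ℕ) (ha : 1 ≤ a) :
    FrobeniusNumber (126 * a ^ 2 + 84 * a + 13)
      ({21 * a + 7, 21 * a + 10, 42 * a + 15, 42 * a + 21} : Set ℕ) := by
  have hgen : ({21 * a + 7, 21 * a + 10, 42 * a + 15, 42 * a + 21} : Set ℕ) =
      {21 * a + 7, 21 * a + 7 + 3, 2 * (21 * a + 7) + 1, 2 * (21 * a + 7) + 7} := by
    ring_nf
  have hprod : 126 * a ^ 2 + 84 * a + 13 + 1 = (6 * a + 2) * (21 * a + 7) := by ring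
  rw [frobeniusNumber_iff, hgen]
  refine ⟨not_mem_closure_of_add_one_eq_mul hprod (by omega), fun n hn => ?_⟩
  refine mem_closure_of_mul_le (c := 6 * a + 2) (by omega) (fun t ht => ?_) (by omega)
  obtain ⟨x, y, z, hxyz, hcost⟩ := exists_three_mul_add_add_seven_mul t
  exact ⟨x, y, z, hxyz, hcost.trans (max_le (by omega) (by omega))⟩
end

section
/- For every integer a ≥ 1, the Frobenius number of the quadruple (21a+13, 21a+16, 42a+27, 42a+33) is g(21a+13, 21a+16, 42a+27, 42a+33) = 126a² + 162a + 51. -/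
/-!
Put `m = 21a + 13`, so the generators are `m, m + 3, 2m + 1, 2m + 7`. Taking them `x, y, z, w`
times gives `m * n + r` with `n = x + y + 2z + 2w` and `r = 3y + z + 7w`; as `y + 2z + 2w ≤ n`,
`2r ≤ 7n`. Hence each element `k` of the semigroup has some `n` with `m * n ≤ k` and
`2k ≤ (2m + 7) * n`. For `k = m (6a + 4) - 1` the second inequality forces `n ≥ 6a + 4`, which
contradicts the first. Conversely, write `k ≥ m (6a + 4)` as `m q + r` with `r < m`: then
`q ≥ 6a + 4`, and every `r ≤ 21a + 12` is `3y + z + 7w` with `y + 2z + 2w ≤ 6a + 4`.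
-/

namespace AddSubmonoid

theorem mem_closure_quadruple_s5 {A : Type*} [AddCommMonoid A] (a b c d k : A) :
    k ∈ closure ({a, b, c, d} : Set A) ↔ ∃ x y z w : ℕ, x • a + y • b + z • c + w • d = k := by
  simp_rw [← Set.singleton_union, closure_union, mem_sup, mem_closure_singleton,
    exists_exists_eq_and]
  simp [add_assoc]

end AddSubmonoid

/-- For `r ≥ 12` the least possible `y + 2w = (2r + 6) / 7 = ⌈2r/7⌉` with `z = 0` still
leaves `w ≥ 0`. -/
theorem exists_three_mul_add_add_seven_mul_eq {n r : ℕ} (hn : 7 ≤ n) (hr : 2 * r ≤ 7 * n) :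
    ∃ y z w, 3 * y + z + 7 * w = r ∧ y + 2 * z + 2 * w ≤ n := by
  rcases lt_or_ge r 12 with hsmall | hlarge
  · exact ⟨r / 3, r % 3, 0, by omega, by omega⟩
  · exact ⟨7 * ((2 * r + 6) / 7) - 2 * r, 0, r - 3 * ((2 * r + 6) / 7), by omega, by omega⟩

section

variable (m : ℕ)

theorem exists_mul_le_of_mem_closure {k : ℕ}
    (hk : k ∈ AddSubmonoid.closure ({m, m + 3, 2 * m + 1, 2 * m + 7} : Set ℕ)) :
    ∃ n, m * n ≤ k ∧ 2 * k ≤ (2 * m + 7) * n := by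
  obtain ⟨x, y, z, w, rfl⟩ := (AddSubmonoid.mem_closure_quadruple_s5 _ _ _ _ _).1 hk
  simp only [smul_eq_mul]
  exact ⟨x + y + 2 * z + 2 * w, by ring_nf; omega, by ring_nf; omega⟩

theorem mul_add_mem_closure_of_le {n y z w : ℕ} (h : y + 2 * z + 2 * w ≤ n) :
    m * n + (3 * y + z + 7 * w) ∈
      AddSubmonoid.closure ({m, m + 3, 2 * m + 1, 2 * m + 7} : Set ℕ) := by
  refine (AddSubmonoid.mem_closure_quadruple_s5 _ _ _ _ _).2
    ⟨n - (y + 2 * z + 2 * w), y, z, w, ?_⟩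
  obtain ⟨x, rfl⟩ := Nat.exists_eq_add_of_le h
  simp only [smul_eq_mul, Nat.add_sub_cancel_left]
  ring

end

/-- For every integer `a ≥ 1`, the Frobenius number of the quadruple
`(21a+13, 21a+16, 42a+27, 42a+33)` is `126a² + 162a + 51`. -/
theorem frobenius_quadruple_case4 (a : ℕ) (ha : 1 ≤ a) :
    FrobeniusNumber (126 * a ^ 2 + 162 * a + 51)
      ({21 * a + 13, 21 * a + 16, 42 * a + 27, 42 * a + 33} : Set ℕ) := by
  set m := 21 * a + 13 with hm
  have hgen : ({21 * a + 13, 21 * a + 16, 42 * a + 27, 42 * a + 33} : Set ℕ) =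
      {m, m + 3, 2 * m + 1, 2 * m + 7} := by
    rw [hm]; ring_nf
  have hF : 126 * a ^ 2 + 162 * a + 51 + 1 = m * (6 * a + 4) := by ring
  rw [hgen, frobeniusNumber_iff]
  constructor
  · intro hmem
    obtain ⟨n, hlow, hup⟩ := exists_mul_le_of_mem_closure m hmem
    have hn : 6 * a + 4 ≤ n := by
      by_contra! hn
      nlinarith [Nat.mul_le_mul_left (2 * m + 7) (Nat.le_of_lt_succ hn)]
    nlinarith [Nat.mul_le_mul_left m hn]
  · intro k hk
    have hq : 6 * a + 4 ≤ k / m := (Nat.le_div_iff_mul_le (by omega)).2 (by nlinarith)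
    obtain ⟨y, z, w, hr, hcost⟩ :=
      exists_three_mul_add_add_seven_mul_eq (n := 6 * a + 4) (r := k % m) (by omega)
        (by have := Nat.mod_lt k (show 0 < m by omega); omega)
    rw [← Nat.div_add_mod k m, ← hr]
    exact mul_add_mem_closure_of_le m (hcost.trans hq)
end

section
/- For every integer a ≥ 0, the Frobenius number of the quadruple (21a+16, 21a+19, 42a+33, 42a+39) is g(21a+16, 21a+19, 42a+33, 42a+39) = 126a² + 201a + 79. -/
/-! With `m = 21a + 16` the generators are `m, m + 3, 2m + 1, 2m + 7`, so a combination with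
multiplicities `x, e, f, d` is `m w + r` with weight `w = x + e + 2f + 2d` and residue
`r = 3e + f + 7d ≤ 7w/2`. The target is `m (6a + 5) - 1`; reaching it would take a residue
`≡ -1 (mod m)`, so at least `m - 1`, with weight at most `6a + 4`: more than `7/2` per unit of
weight allows. Conversely every residue below `m` is attained with weight at most `6a + 5`, so
every `n ≥ m (6a + 5)` is reached. -/

theorem AddSubmonoid.mem_closure_four {M : Type*} [AddCommMonoid M] {p q r s n : M} :
    n ∈ AddSubmonoid.closure ({p, q, r, s} : Set M) ↔
      ∃ x₁ x₂ x₃ x₄ : ℕ, x₁ • p + x₂ • q + x₃ • r + x₄ • s = n := by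
  simp_rw [← Set.singleton_union, AddSubmonoid.closure_union, AddSubmonoid.mem_sup,
    AddSubmonoid.mem_closure_singleton]
  simp [add_assoc]

def shiftedQuadruple (m : ℕ) : Set ℕ := {m, m + 3, 2 * m + 1, 2 * m + 7}

theorem mem_closure_shiftedQuadruple_iff {m n : ℕ} :
    n ∈ AddSubmonoid.closure (shiftedQuadruple m) ↔
      ∃ w e f d : ℕ, e + 2 * f + 2 * d ≤ w ∧ m * w + (3 * e + f + 7 * d) = n := by
  rw [shiftedQuadruple, AddSubmonoid.mem_closure_four]
  constructor
  · rintro ⟨x, e, f, d, rfl⟩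
    exact ⟨x + e + 2 * f + 2 * d, e, f, d, by omega, by simp only [smul_eq_mul]; ring⟩
  · rintro ⟨w, e, f, d, hw, rfl⟩
    obtain ⟨x, rfl⟩ := Nat.exists_eq_add_of_le hw
    exact ⟨x, e, f, d, by simp only [smul_eq_mul]; ring⟩

theorem notMem_closure_shiftedQuadruple_of_add_one_eq_mul {m w n : ℕ}
    (hw : 7 * w < 2 * m + 5) (hn : n + 1 = m * w) :
    n ∉ AddSubmonoid.closure (shiftedQuadruple m) := by
  rw [mem_closure_shiftedQuadruple_iff]
  rintro ⟨v, e, f, d, hv, rfl⟩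
  have hvw : v < w := by
    by_contra! hwv
    have := Nat.mul_le_mul_left m hwv
    omega
  obtain ⟨δ, rfl⟩ := Nat.exists_eq_add_of_lt hvw
  have hres : 3 * e + f + 7 * d + 1 = m * (δ + 1) := by
    rw [← Nat.add_right_cancel_iff (n := m * v)]
    linarith
  have hresidue : 2 * (3 * e + f + 7 * d) ≤ 7 * v := by omega
  nlinarith

theorem mem_closure_shiftedQuadruple_of_mul_le {m w n : ℕ} (hm : 0 < m) (hn : m * w ≤ n)
    (hres : ∀ c < m, ∃ e f d : ℕ, 3 * e + f + 7 * d = c ∧ e + 2 * f + 2 * d ≤ w) :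
    n ∈ AddSubmonoid.closure (shiftedQuadruple m) := by
  obtain ⟨e, f, d, hc, hweight⟩ := hres (n % m) (Nat.mod_lt n hm)
  have hwq : w ≤ n / m := (Nat.le_div_iff_mul_le hm).2 (by rwa [mul_comm])
  exact mem_closure_shiftedQuadruple_iff.2
    ⟨n / m, e, f, d, hweight.trans hwq, by rw [hc, Nat.div_add_mod]⟩

/-- Write `c = 21t + u` with `u < 21` and spend `d = 3t` on `21t`. Every `u < 16` needs weight
at most `5`, and every `u < 21` at most `6`, which suffices since `t < a` once `u ≥ 16`. -/
theorem exists_residue_weight_le {a c : ℕ} (hc : c < 21 * a + 16) :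
    ∃ e f d : ℕ, 3 * e + f + 7 * d = c ∧ e + 2 * f + 2 * d ≤ 6 * a + 5 := by
  have small : ∀ u < 16, ∃ e < 6, ∃ f < 3, ∃ d < 3,
      3 * e + f + 7 * d = u ∧ e + 2 * f + 2 * d ≤ 5 := by decide
  have large : ∀ u < 21, ∃ e < 7, ∃ f < 3, ∃ d < 3,
      3 * e + f + 7 * d = u ∧ e + 2 * f + 2 * d ≤ 6 := by decide
  have hdiv := Nat.div_add_mod c 21
  have ht : c / 21 ≤ a := by omega
  by_cases hu : c % 21 < 16
  · obtain ⟨e, -, f, -, d, -, hsum, hweight⟩ := small _ hu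
    exact ⟨e, f, d + 3 * (c / 21), by omega, by omega⟩
  · have ht' : c / 21 < a := by omega
    obtain ⟨e, -, f, -, d, -, hsum, hweight⟩ := large _ (Nat.mod_lt c (by norm_num))
    exact ⟨e, f, d + 3 * (c / 21), by omega, by omega⟩

/-- For every integer `a ≥ 0`, the Frobenius number of the quadruple
`(21a+16, 21a+19, 42a+33, 42a+39)` is `126a² + 201a + 79`. -/
theorem frobenius_quadruple_case5 (a : ℕ) :
    FrobeniusNumber (126 * a ^ 2 + 201 * a + 79)
      ({21 * a + 16, 21 * a + 19, 42 * a + 33, 42 * a + 39} : Set ℕ) := by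
  have hS : ({21 * a + 16, 21 * a + 19, 42 * a + 33, 42 * a + 39} : Set ℕ) =
      shiftedQuadruple (21 * a + 16) := by
    rw [shiftedQuadruple]
    ring_nf
  have hN : 126 * a ^ 2 + 201 * a + 79 + 1 = (21 * a + 16) * (6 * a + 5) := by ring
  rw [frobeniusNumber_iff, hS]
  refine ⟨notMem_closure_shiftedQuadruple_of_add_one_eq_mul (by omega) hN, fun k hk => ?_⟩
  exact mem_closure_shiftedQuadruple_of_mul_le (by omega) (by omega)
    fun c hc => exists_residue_weight_le hc
end

section
/- For every integer a ≥ 0, the Frobenius number of the quadruple (21a+19, 21a+22, 42a+39, 42a+45) is g(21a+19, 21a+22, 42a+39, 42a+45) = 126a² + 240a + 113. -/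
/-!
With `A = 21a + 19` the generators are `A, A + 3, 2A + 1, 2A + 7`, so the semigroup they generate
consists of the numbers `qA + (3y + z + 7w)` with `y + 2z + 2w ≤ q`. As
`2(3y + z + 7w) ≤ 7(y + 2z + 2w)`, the excess over the multiple `qA` is at most `7q/2`, which is too
little to reach `(6a + 6)A - 1 = (6a + 5)A + (A - 1)`. Conversely, every residue `r` splits as
`3y + z + 7w` with weight `y + 2z + 2w ≤ 6⌊r/21⌋ + 6 ≤ 6a + 6`, so every number `qA + r` with
`q ≥ 6a + 6` is reached.
-/

theorem AddSubmonoid.mem_closure_four_s7 {M : Type*} [AddCommMonoid M] {a b c d x : M} :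
    x ∈ AddSubmonoid.closure ({a, b, c, d} : Set M) ↔
      ∃ i j k l : ℕ, i • a + j • b + k • c + l • d = x := by
  simp only [← Submodule.span_nat_eq_addSubmonoidClosure, Submodule.mem_toAddSubmonoid,
    Submodule.mem_span_insert, Submodule.mem_span_singleton]
  constructor
  · rintro ⟨i, _, ⟨j, _, ⟨k, _, ⟨l, rfl⟩, rfl⟩, rfl⟩, rfl⟩
    exact ⟨i, j, k, l, by abel⟩
  · rintro ⟨i, j, k, l, rfl⟩
    exact ⟨i, _, ⟨j, _, ⟨k, _, ⟨l, rfl⟩, rfl⟩, rfl⟩, by abel⟩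

namespace FrobeniusQuadruple

theorem mem_closure_iff {A n : ℕ} :
    n ∈ AddSubmonoid.closure ({A, A + 3, 2 * A + 1, 2 * A + 7} : Set ℕ) ↔
      ∃ q y z w, y + 2 * z + 2 * w ≤ q ∧ q * A + (3 * y + z + 7 * w) = n := by
  rw [AddSubmonoid.mem_closure_four_s7]
  constructor
  · rintro ⟨i, y, z, w, rfl⟩
    exact ⟨i + y + 2 * z + 2 * w, y, z, w, by omega, by simp only [smul_eq_mul]; ring⟩
  · rintro ⟨q, y, z, w, hq, rfl⟩
    obtain ⟨i, rfl⟩ := Nat.exists_eq_add_of_le' hq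
    exact ⟨i, y, z, w, by simp only [smul_eq_mul]; ring⟩

theorem exists_weighted_decomposition (r : ℕ) :
    ∃ y z w, 3 * y + z + 7 * w = r ∧ y + 2 * z + 2 * w ≤ 6 * (r / 21) + 6 := by
  have table : ∀ t < 21, ∃ y < 7, ∃ z < 3, ∃ w < 3,
      3 * y + z + 7 * w = t ∧ y + 2 * z + 2 * w ≤ 6 := by
    decide
  obtain ⟨y, -, z, -, w, -, hyzw, hweight⟩ := table (r % 21) (Nat.mod_lt r (by norm_num))
  exact ⟨y, z, w + 3 * (r / 21), by omega, by omega⟩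

theorem mul_add_mem_closure {A q r : ℕ} (h : 6 * (r / 21) + 6 ≤ q) :
    q * A + r ∈ AddSubmonoid.closure ({A, A + 3, 2 * A + 1, 2 * A + 7} : Set ℕ) := by
  obtain ⟨y, z, w, rfl, hweight⟩ := exists_weighted_decomposition r
  exact mem_closure_iff.2 ⟨q, y, z, w, hweight.trans h, rfl⟩

theorem succ_mul_sub_one_notMem_closure {A q : ℕ} (h : 7 * q + 2 < 2 * A) :
    (q + 1) * A - 1 ∉ AddSubmonoid.closure ({A, A + 3, 2 * A + 1, 2 * A + 7} : Set ℕ) := by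
  intro hmem
  obtain ⟨m, y, z, w, hweight, hm⟩ := mem_closure_iff.1 hmem
  have hexcess : 2 * (3 * y + z + 7 * w) ≤ 7 * m := by omega
  have hA : (q + 1) * A = q * A + A := by ring
  rcases le_or_gt m q with hmq | hqm
  · have : m * A ≤ q * A := Nat.mul_le_mul_right A hmq
    omega
  · have : (q + 1) * A ≤ m * A := Nat.mul_le_mul_right A hqm
    omega

end FrobeniusQuadruple

open FrobeniusQuadruple in
/-- For every integer `a ≥ 0`, the Frobenius number of the quadruple
`(21a+19, 21a+22, 42a+39, 42a+45)` is `126a² + 240a + 113`. -/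
theorem frobenius_quadruple_case6 (a : ℕ) :
    FrobeniusNumber (126 * a ^ 2 + 240 * a + 113)
      ({21 * a + 19, 21 * a + 22, 42 * a + 39, 42 * a + 45} : Set ℕ) := by
  have hgens : ({21 * a + 19, 21 * a + 22, 42 * a + 39, 42 * a + 45} : Set ℕ) =
      {21 * a + 19, 21 * a + 19 + 3, 2 * (21 * a + 19) + 1, 2 * (21 * a + 19) + 7} := by
    ring_nf
  have hN : 126 * a ^ 2 + 240 * a + 113 + 1 = (6 * a + 5 + 1) * (21 * a + 19) := by ring
  rw [hgens, frobeniusNumber_iff]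
  generalize hA : 21 * a + 19 = A at hN ⊢
  refine ⟨?_, fun k hk => ?_⟩
  · rw [← Nat.sub_eq_of_eq_add hN.symm]
    exact succ_mul_sub_one_notMem_closure (by omega)
  · have hq : 6 * a + 5 + 1 ≤ k / A := (Nat.le_div_iff_mul_le (by omega)).2 (hN ▸ hk)
    have hr : k % A / 21 ≤ a := by
      have := Nat.mod_lt k (by omega : 0 < A)
      omega
    rw [← Nat.div_add_mod' k A]
    exact mul_add_mem_closure (by omega)
end

section
/- For every integer k ≥ 0, setting x = 4k+3, the Frobenius number of the quadruple (x, 3x+2, 9x+8, 27x+26) = (4k+3, 12k+11, 36k+35, 108k+107) equals 48k² + 64k + 19 − 3(4k+3)·(k + ⌊(2k+1)/13⌋ + ⌊(2k+7)/13⌋ − ⌊(k+3)/13⌋). -/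
/-!
Write `a = 4k + 3`. The generators are `3ⁱa + 2eᵢ` with `(e₀, e₁, e₂, e₃) = (0, 1, 4, 13)`, so the
semigroup consists of the numbers `a u + 2 v` with `u ≥ greedyCost v`, the least value of
`3y + 9z + 27w` subject to `y + 4z + 13w = v`. As `a` is odd, every `m` is `a u + 2 v` with
`v < a` in exactly one way, and `m` is representable iff `u ≥ greedyCost v`. Since `greedyCost`
is monotone, the worst residue is `v = a - 1`, giving the Frobenius number
`a (greedyCost (a - 1) - 1) + 2 (a - 1)`; evaluating `greedyCost (4k + 2)` produces the floors.
-/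

/-- The least value of `3y + 9z + 27w` subject to `y + 4z + 13w = v`, attained greedily. -/
def greedyCost (v : ℕ) : ℕ := 27 * (v / 13) + 9 * (v % 13 / 4) + 3 * (v % 13 % 4)

lemma greedyCost_le (y z w : ℕ) : greedyCost (y + 4 * z + 13 * w) ≤ 3 * y + 9 * z + 27 * w := by
  unfold greedyCost; omega

lemma greedyCost_monotone : Monotone greedyCost := by
  intro v v' h; unfold greedyCost; omega

lemma greedyCost_pos {v : ℕ} (hv : 0 < v) : 0 < greedyCost v := by
  unfold greedyCost; omega

lemma greedyCost_four_mul_add_two (k : ℕ) :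
    greedyCost (4 * k + 2) + 3 * (k + (2 * k + 1) / 13 + (2 * k + 7) / 13 - (k + 3) / 13) =
      12 * k + 6 := by
  obtain ⟨q, r, hr, rfl⟩ : ∃ q r, r < 13 ∧ k = 13 * q + r :=
    ⟨k / 13, k % 13, Nat.mod_lt _ (by norm_num), (Nat.div_add_mod k 13).symm⟩
  unfold greedyCost
  interval_cases r <;> omega

lemma AddSubmonoid.mem_closure_four_iff (a b c d n : ℕ) :
    n ∈ AddSubmonoid.closure ({a, b, c, d} : Set ℕ) ↔
      ∃ x y z w : ℕ, x * a + y * b + z * c + w * d = n := by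
  simp only [← Set.singleton_union, AddSubmonoid.closure_union, AddSubmonoid.mem_sup,
    AddSubmonoid.mem_closure_singleton, smul_eq_mul, exists_exists_eq_and]
  constructor
  · rintro ⟨x, _, ⟨y, _, ⟨z, w, rfl⟩, rfl⟩, rfl⟩
    exact ⟨x, y, z, w, by ring⟩
  · rintro ⟨x, y, z, w, rfl⟩
    exact ⟨x, _, ⟨y, _, ⟨z, w, rfl⟩, rfl⟩, by ring⟩

lemma mem_closure_recursive_iff (a n : ℕ) :
    n ∈ AddSubmonoid.closure ({a, 3 * a + 2, 9 * a + 8, 27 * a + 26} : Set ℕ) ↔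
      ∃ u v, greedyCost v ≤ u ∧ a * u + 2 * v = n := by
  rw [AddSubmonoid.mem_closure_four_iff]
  have regroup : ∀ x y z w : ℕ, x * a + y * (3 * a + 2) + z * (9 * a + 8) + w * (27 * a + 26) =
      a * (x + (3 * y + 9 * z + 27 * w)) + 2 * (y + 4 * z + 13 * w) := by
    intros; ring
  constructor
  · rintro ⟨x, y, z, w, rfl⟩
    exact ⟨_, _, (greedyCost_le y z w).trans (Nat.le_add_left _ x), (regroup x y z w).symm⟩
  · rintro ⟨u, v, hu, rfl⟩
    refine ⟨u - greedyCost v, v % 13 % 4, v % 13 / 4, v / 13, ?_⟩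
    rw [regroup]
    unfold greedyCost at hu ⊢
    congr 2 <;> omega

theorem frobeniusNumber_of_mem_closure_iff {s : Set ℕ} {a c : ℕ} {f : ℕ → ℕ} (ha : Odd a)
    (hf : Monotone f) (hc : f (a - 1) = c + 1)
    (hs : ∀ n, n ∈ AddSubmonoid.closure s ↔ ∃ u v, f v ≤ u ∧ a * u + 2 * v = n) :
    FrobeniusNumber (a * c + 2 * (a - 1)) s := by
  obtain ⟨r, rfl⟩ := ha
  rw [Nat.add_sub_cancel] at hc ⊢
  rw [frobeniusNumber_iff, hs]
  constructor
  · rintro ⟨u, v, hu, huv⟩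
    have hlin : 2 * (r * u) + u + 2 * v = 2 * (r * c) + c + 4 * r := by linarith
    rcases le_or_gt u c with hle | hlt
    · -- `u ≡ c [MOD 2]`, so `v ≥ 2r = a - 1` and `f v ≥ c + 1`
      have := Nat.mul_le_mul_left r hle
      have := hf (show 2 * r ≤ v by omega)
      omega
    · have := Nat.mul_le_mul_left r (show c + 2 ≤ u by omega)
      rw [Nat.mul_add] at this
      omega
  · intro m hm
    rw [hs]
    -- `v` is `m / 2` modulo `a`, as `2 (r + 1) = a + 1`
    set v := m * (r + 1) % (2 * r + 1)
    have hva : v < 2 * r + 1 := Nat.mod_lt _ (by omega)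
    have hmod : 2 * v ≡ m [MOD 2 * r + 1] :=
      calc 2 * v ≡ 2 * (m * (r + 1)) [MOD 2 * r + 1] := (Nat.mod_modEq _ _).mul_left 2
        _ = m + (2 * r + 1) * m := by ring
        _ ≡ m [MOD 2 * r + 1] := by simp [Nat.ModEq]
    obtain ⟨u, hu⟩ := (Nat.modEq_iff_dvd' (by omega)).mp hmod
    have hcu : c < u := Nat.lt_of_mul_lt_mul_left (a := 2 * r + 1) (by omega)
    exact ⟨u, v, (hf (show v ≤ 2 * r by omega)).trans (by omega), by omega⟩

/-- For every integer `k ≥ 0`, with `x = 4k+3`, the Frobenius number of the quadruple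
`(x, 3x+2, 9x+8, 27x+26) = (4k+3, 12k+11, 36k+35, 108k+107)` equals
`48k² + 64k + 19 − 3(4k+3)·(k + ⌊(2k+1)/13⌋ + ⌊(2k+7)/13⌋ − ⌊(k+3)/13⌋)`. -/
theorem frobenius_recursive_4k3 (k : ℕ) :
    FrobeniusNumber
      (48 * k ^ 2 + 64 * k + 19 -
        3 * (4 * k + 3) * (k + (2 * k + 1) / 13 + (2 * k + 7) / 13 - (k + 3) / 13))
      ({4 * k + 3, 12 * k + 11, 36 * k + 35, 108 * k + 107} : Set ℕ) := by
  set T := k + (2 * k + 1) / 13 + (2 * k + 7) / 13 - (k + 3) / 13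
  obtain ⟨c, hc⟩ :=
    Nat.exists_eq_add_one_of_ne_zero (greedyCost_pos (by omega : 0 < 4 * k + 2)).ne'
  have hcT : c + 3 * T = 12 * k + 5 := by have := greedyCost_four_mul_add_two k; omega
  have hprod : (4 * k + 3) * c + 3 * (4 * k + 3) * T = 48 * k ^ 2 + 56 * k + 15 := by
    have := congrArg ((4 * k + 3) * ·) hcT
    linarith
  have hN : 48 * k ^ 2 + 64 * k + 19 - 3 * (4 * k + 3) * T =
      (4 * k + 3) * c + 2 * (4 * k + 3 - 1) := by
    omega
  rw [hN, show 12 * k + 11 = 3 * (4 * k + 3) + 2 by ring,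
    show 36 * k + 35 = 9 * (4 * k + 3) + 8 by ring,
    show 108 * k + 107 = 27 * (4 * k + 3) + 26 by ring]
  exact frobeniusNumber_of_mem_closure_iff ⟨2 * k + 1, by ring⟩ greedyCost_monotone hc
    (mem_closure_recursive_iff _)
end

section
/- For every integer k ≥ 5, the Frobenius number of the sextuple (6k+1, 6k+4, 6k+7, 12k+3, 12k+9, 12k+15) is g(6k+1, 6k+4, 6k+7, 12k+3, 12k+9, 12k+15) = (6k+1)·(k − ⌊k/13⌋) − 1. -/
/-!
Put `a = 6k + 1`. The generators are `a + 0, a + 3, a + 6, 2a + 1, 2a + 7, 2a + 13`, so a sum of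
generators of total level `T` (the sum of the multipliers of `a`) is `a * T + c`, where the offset
`c` is at most `13 T / 2`. Hence `n = a * Q + r` with `r < a` is representable as soon as the offset
`r` is attained at level `≤ Q` (pad with copies of `a`). Every `r ≤ 6k` is attained at level
`k - ⌊k/13⌋`, mostly with offsets `6` (level 1) and `13` (level 2); conversely `a (k - ⌊k/13⌋) - 1`
would need a level `T < k - ⌊k/13⌋` with offset `≥ 6k`, which `2c ≤ 13T` forbids.
-/

namespace FrobeniusSextuple

def generators (a : ℕ) : Set ℕ :=
  {a, a + 3, a + 6, 2 * a + 1, 2 * a + 7, 2 * a + 13}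

/-- The offset `c` is attained at level at most `T`: the generators other than `a` contribute
offsets `3, 6, 1, 7, 13` at levels `1, 1, 2, 2, 2`. -/
def OffsetAttained (c T : ℕ) : Prop :=
  ∃ y z u v w : ℕ, 3 * y + 6 * z + u + 7 * v + 13 * w = c ∧ y + z + 2 * u + 2 * v + 2 * w ≤ T

namespace OffsetAttained

theorem mono {c T T' : ℕ} (h : OffsetAttained c T) (hT : T ≤ T') : OffsetAttained c T' :=
  let ⟨y, z, u, v, w, hc, hw⟩ := h
  ⟨y, z, u, v, w, hc, hw.trans hT⟩

theorem add {c T c' T' : ℕ} (h : OffsetAttained c T) (h' : OffsetAttained c' T') :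
    OffsetAttained (c + c') (T + T') :=
  let ⟨y, z, u, v, w, hc, hw⟩ := h
  let ⟨y', z', u', v', w', hc', hw'⟩ := h'
  ⟨y + y', z + z', u + u', v + v', w + w', by omega, by omega⟩

theorem two_mul_le {c T : ℕ} (h : OffsetAttained c T) : 2 * c ≤ 13 * T := by
  obtain ⟨y, z, u, v, w, rfl, hw⟩ := h
  omega

end OffsetAttained

theorem mem_closure_generators_iff {a n : ℕ} :
    n ∈ AddSubmonoid.closure (generators a) ↔ ∃ T c, OffsetAttained c T ∧ a * T + c = n := by
  let M : AddSubmonoid ℕ :=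
    { carrier := {n | ∃ T c, OffsetAttained c T ∧ a * T + c = n}
      zero_mem' := ⟨0, 0, ⟨0, 0, 0, 0, 0, rfl, le_rfl⟩, rfl⟩
      add_mem' := by
        rintro _ _ ⟨T, c, hc, rfl⟩ ⟨T', c', hc', rfl⟩
        exact ⟨T + T', c + c', hc.add hc', by ring⟩ }
  have closure_le : AddSubmonoid.closure (generators a) ≤ M := by
    refine AddSubmonoid.closure_le.mpr ?_
    simp only [generators, Set.insert_subset_iff, Set.singleton_subset_iff]
    refine ⟨⟨1, 0, ⟨0, 0, 0, 0, 0, ?_⟩, ?_⟩, ⟨1, 3, ⟨1, 0, 0, 0, 0, ?_⟩, ?_⟩,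
      ⟨1, 6, ⟨0, 1, 0, 0, 0, ?_⟩, ?_⟩, ⟨2, 1, ⟨0, 0, 1, 0, 0, ?_⟩, ?_⟩,
      ⟨2, 7, ⟨0, 0, 0, 1, 0, ?_⟩, ?_⟩, ⟨2, 13, ⟨0, 0, 0, 0, 1, ?_⟩, ?_⟩⟩ <;> simp <;> ring
  refine ⟨fun hn => closure_le hn, ?_⟩
  rintro ⟨T, c, ⟨y, z, u, v, w, rfl, hw⟩, rfl⟩
  have multiple_mem : ∀ g ∈ generators a, ∀ x : ℕ, x * g ∈ AddSubmonoid.closure (generators a) :=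
    fun g hg x => by simpa using nsmul_mem (AddSubmonoid.subset_closure hg) x
  have hsum : a * T + (3 * y + 6 * z + u + 7 * v + 13 * w) =
      (T - (y + z + 2 * u + 2 * v + 2 * w)) * a + y * (a + 3) + z * (a + 6) + u * (2 * a + 1) +
        v * (2 * a + 7) + w * (2 * a + 13) := by
    obtain ⟨x, rfl⟩ := Nat.exists_eq_add_of_le hw
    rw [Nat.add_sub_cancel_left]
    ring
  rw [hsum]
  refine add_mem (add_mem (add_mem (add_mem (add_mem ?_ ?_) ?_) ?_) ?_) ?_ <;>
    exact multiple_mem _ (by simp [generators]) _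

-- The bounds on the multipliers make this a finite check.
theorem exists_offset_repr_of_lt_sixty : ∀ r < 60, ∃ y ≤ 1, ∃ z ≤ 6, ∃ u ≤ 2, ∃ v ≤ 1, ∃ w ≤ 4,
    3 * y + 6 * z + u + 7 * v + 13 * w = r ∧
      y + z + 2 * u + 2 * v + 2 * w ≤ max 5 ((r + 5) / 6) := by
  decide

theorem offsetAttained_of_le {k r : ℕ} (hk : 5 ≤ k) (hr : r ≤ 6 * k) :
    OffsetAttained r (k - k / 13) := by
  rcases Nat.lt_or_ge r 60 with hsmall | hlarge
  · obtain ⟨y, -, z, -, u, -, v, -, w, -, hc, hw⟩ := exists_offset_repr_of_lt_sixty r hsmall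
    exact ⟨y, z, u, v, w, hc, hw.trans (by omega)⟩
  -- `r = 6Q + ρ = 13ρ + 6s` with `s = Q - 2ρ ≥ 0`; then every 13 sixes become 6 thirteens.
  set s := r / 6 - 2 * (r % 6)
  exact ⟨0, s % 13, 0, 0, r % 6 + 6 * (s / 13), by omega, by omega⟩

theorem lt_and_le_of_mul_add_add_one_eq {a T c m : ℕ} (h : a * T + c + 1 = a * m) :
    T < m ∧ a ≤ c + 1 := by
  have hT : T < m := by
    by_contra! hmT
    have := Nat.mul_le_mul_left a hmT
    omega
  have := Nat.mul_le_mul_left a hT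
  rw [Nat.mul_succ] at this
  exact ⟨hT, by omega⟩

theorem generators_six_mul_add_one (k : ℕ) :
    generators (6 * k + 1) =
      {6 * k + 1, 6 * k + 4, 6 * k + 7, 12 * k + 3, 12 * k + 9, 12 * k + 15} := by
  simp only [generators]
  ring_nf

end FrobeniusSextuple

open FrobeniusSextuple in
/-- For every integer `k ≥ 5`, the Frobenius number of the sextuple
`(6k+1, 6k+4, 6k+7, 12k+3, 12k+9, 12k+15)` is `(6k+1)·(k − ⌊k/13⌋) − 1`. -/
theorem frobenius_sextuple (k : ℕ) (hk : 5 ≤ k) :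
    FrobeniusNumber ((6 * k + 1) * (k - k / 13) - 1)
      ({6 * k + 1, 6 * k + 4, 6 * k + 7, 12 * k + 3, 12 * k + 9, 12 * k + 15} : Set ℕ) := by
  set m := k - k / 13
  have ha : 0 < 6 * k + 1 := Nat.succ_pos _
  rw [frobeniusNumber_iff, ← generators_six_mul_add_one]
  constructor
  · intro hmem
    obtain ⟨T, c, hc, hn⟩ := mem_closure_generators_iff.mp hmem
    have hpos : 0 < (6 * k + 1) * m := Nat.mul_pos ha (by omega)
    obtain ⟨hT, hc6⟩ :=
      lt_and_le_of_mul_add_add_one_eq (a := 6 * k + 1) (T := T) (c := c) (m := m) (by omega)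
    have hcT := hc.two_mul_le
    omega
  · intro n hn
    have hmn : m ≤ n / (6 * k + 1) :=
      (Nat.le_div_iff_mul_le ha).mpr (by rw [mul_comm]; omega)
    have hr : n % (6 * k + 1) ≤ 6 * k := Nat.lt_succ_iff.mp (Nat.mod_lt n ha)
    exact mem_closure_generators_iff.mpr
      ⟨_, _, (offsetAttained_of_le hk hr).mono hmn, Nat.div_add_mod n (6 * k + 1)⟩
end

section
/- For every integer a ≥ 2, the Frobenius number of the quadruple (a, a+1, a+2, a+4) is g(a, a+1, a+2, a+4) = (a+1)·⌊a/4⌋ + ⌊(a+1)/4⌋ + 2·⌊(a+2)/4⌋ − 1. -/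
/-!
An element of the semigroup generated by `a, a+1, a+2, a+4` that uses `m` generators is
`m * a + r`, where `r` is a sum of `m` terms from `{0, 1, 2, 4}`; such sums fill `[0, 4m]`
except `4m - 1`. So the semigroup is the union of the blocks `[m a, m a + 4m]`, each with the
hole `m a + 4m - 1`. With `q = ⌊a/4⌋`, from block `q + 1` on the blocks overlap and cover the
holes, so the Frobenius number is the hole `q a + 4q - 1` of block `q` when `a % 4 ≤ 1`, and
the last number `(q + 1) a - 1` of the gap after block `q` when `a % 4 ≥ 2`.
-/

theorem exists_sum_zero_one_two_four_eq {m r : ℕ} (hr : r ≤ 4 * m) (hr' : r + 1 ≠ 4 * m) :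
    ∃ x y z w : ℕ, x + y + z + w = m ∧ y + 2 * z + 4 * w = r := by
  have := Nat.mod_lt r four_pos
  interval_cases h : r % 4
  · exact ⟨m - r / 4, 0, 0, r / 4, by omega, by omega⟩
  · exact ⟨m - r / 4 - 1, 1, 0, r / 4, by omega, by omega⟩
  · exact ⟨m - r / 4 - 1, 0, 1, r / 4, by omega, by omega⟩
  · exact ⟨m - r / 4 - 2, 1, 1, r / 4, by omega, by omega⟩

theorem mem_closure_iff_exists_mul_add (a n : ℕ) :
    n ∈ AddSubmonoid.closure ({a, a + 1, a + 2, a + 4} : Set ℕ) ↔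
      ∃ m r : ℕ, r ≤ 4 * m ∧ r + 1 ≠ 4 * m ∧ n = m * a + r := by
  constructor
  · intro hn
    induction hn using AddSubmonoid.closure_induction with
    | mem x hx =>
      rcases hx with rfl | rfl | rfl | rfl
      · exact ⟨1, 0, by omega, by omega, by ring⟩
      · exact ⟨1, 1, by omega, by omega, by ring⟩
      · exact ⟨1, 2, by omega, by omega, by ring⟩
      · exact ⟨1, 4, by omega, by omega, by ring⟩
    | zero => exact ⟨0, 0, by omega, by omega, by ring⟩
    | add x y _ _ ihx ihy =>
      obtain ⟨m₁, r₁, hr₁, hr₁', rfl⟩ := ihx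
      obtain ⟨m₂, r₂, hr₂, hr₂', rfl⟩ := ihy
      exact ⟨m₁ + m₂, r₁ + r₂, by omega, by omega, by ring⟩
  · rintro ⟨m, r, hr, hr', rfl⟩
    obtain ⟨x, y, z, w, rfl, rfl⟩ := exists_sum_zero_one_two_four_eq hr hr'
    have hgen (g : ℕ) (hg : g ∈ ({a, a + 1, a + 2, a + 4} : Set ℕ)) (k : ℕ) :
        k * g ∈ AddSubmonoid.closure ({a, a + 1, a + 2, a + 4} : Set ℕ) := by
      simpa using nsmul_mem (AddSubmonoid.subset_closure hg) k
    have hsum : (x + y + z + w) * a + (y + 2 * z + 4 * w) =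
        x * a + y * (a + 1) + z * (a + 2) + w * (a + 4) := by ring
    rw [hsum]
    exact add_mem (add_mem (add_mem (hgen a (by simp) x) (hgen (a + 1) (by simp) y))
      (hgen (a + 2) (by simp) z)) (hgen (a + 4) (by simp) w)

section

variable {a k n : ℕ}

theorem notMem_closure_of_le_of_lt (hn : k * a + 4 * k ≤ n + 1) (hn' : n < (k + 1) * a)
    (hne : n ≠ k * a + 4 * k) :
    n ∉ AddSubmonoid.closure ({a, a + 1, a + 2, a + 4} : Set ℕ) := by
  rw [mem_closure_iff_exists_mul_add]
  rintro ⟨m, r, hr, hr', rfl⟩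
  rcases lt_trichotomy m k with hm | rfl | hm
  · have : (m + 1) * a + 4 * (m + 1) ≤ k * a + 4 * k := by gcongr <;> omega
    rw [add_one_mul] at this
    omega
  · omega
  · have : (k + 1) * a ≤ m * a := Nat.mul_le_mul_right a hm
    omega

theorem mem_closure_of_mul_le_s11 (ha : 0 < a) (hk : a < 4 * k) (hn : k * a ≤ n) :
    n ∈ AddSubmonoid.closure ({a, a + 1, a + 2, a + 4} : Set ℕ) := by
  have hkm : k ≤ n / a := (Nat.le_div_iff_mul_le ha).mpr hn
  have hr : n % a < a := Nat.mod_lt n ha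
  rw [mem_closure_iff_exists_mul_add]
  exact ⟨n / a, n % a, by omega, by omega, (Nat.div_add_mod' n a).symm⟩

end

theorem frobeniusNumber_of_mod_four_lt_two {a : ℕ} (ha : 4 ≤ a) (hs : a % 4 < 2) :
    FrobeniusNumber (a / 4 * a + 4 * (a / 4) - 1) ({a, a + 1, a + 2, a + 4} : Set ℕ) := by
  set q := a / 4
  have hq : 4 * q ≤ a := Nat.mul_div_le a 4
  have hqa : (q + 1) * a = q * a + a := add_one_mul q a
  rw [frobeniusNumber_iff]
  refine ⟨notMem_closure_of_le_of_lt (k := q) (by omega) (by omega) (by omega), fun n hn => ?_⟩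
  -- `q a + 4q = q (a + 4)` is a multiple of a generator; everything above it is past block `q`.
  have hqa4 : q * (a + 4) = q * a + 4 * q := by ring
  rcases (by omega : n = q * (a + 4) ∨ (q + 1) * a ≤ n) with rfl | hn
  · simpa using nsmul_mem (AddSubmonoid.subset_closure (by simp : a + 4 ∈ _)) q
  · exact mem_closure_of_mul_le_s11 (by omega) (by omega) hn

theorem frobeniusNumber_of_two_le_mod_four {a : ℕ} (hs : 2 ≤ a % 4) :
    FrobeniusNumber ((a / 4 + 1) * a - 1) ({a, a + 1, a + 2, a + 4} : Set ℕ) := by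
  set q := a / 4
  have hq : 4 * q + 2 ≤ a ∧ a < 4 * q + 4 := by omega
  have hqa : (q + 1) * a = q * a + a := add_one_mul q a
  rw [frobeniusNumber_iff]
  exact ⟨notMem_closure_of_le_of_lt (k := q) (by omega) (by omega) (by omega),
    fun n hn => mem_closure_of_mul_le_s11 (k := q + 1) (by omega) (by omega) (by omega)⟩

/-- For every integer `a ≥ 2`, the Frobenius number of the quadruple
`(a, a+1, a+2, a+4)` is `(a+1)·⌊a/4⌋ + ⌊(a+1)/4⌋ + 2·⌊(a+2)/4⌋ − 1`. -/
theorem frobenius_a_a1_a2_a4 (a : ℕ) (ha : 2 ≤ a) :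
    FrobeniusNumber ((a + 1) * (a / 4) + (a + 1) / 4 + 2 * ((a + 2) / 4) - 1)
      ({a, a + 1, a + 2, a + 4} : Set ℕ) := by
  have hmul : (a + 1) * (a / 4) = a / 4 * a + a / 4 := by ring
  rcases Nat.lt_or_ge (a % 4) 2 with hs | hs
  · convert frobeniusNumber_of_mod_four_lt_two (by omega) hs using 1
    rw [hmul]
    omega
  · convert frobeniusNumber_of_two_le_mod_four hs using 1
    rw [hmul, add_one_mul]
    omega
end
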